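/- Let A be a Hopf algebra and R ⊆ ker ε a right ideal. Define 𝓡̂ = {a ∈ ker ε : (X ⊗ id)(ad(a)) = 0 for all X ∈ L}, where L is a fixed set of ε-derivations X : A → ℂ and ad(a) = Σ a⁽²⁾ ⊗ κ(a⁽¹⁾)a⁽³⁾. Then 𝓡̂ is a right ideal of A contained in ker ε. -/

import Mathlib

/-!
Write `ψ_X(c) = Σ X(c⁽²⁾) κ(c⁽¹⁾)`, so that `(X ⊗ id) ad(a) = Σ ψ_X(a⁽¹⁾) a⁽²⁾`. Since `κ` is an
antihomomorphism, an ε-derivation `X` makes `ψ_X` a twisted derivation,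
`ψ_X(ab) = ψ_X(b) κ(a) + κ(b) ψ_X(a)`, and summing against `a⁽²⁾b⁽²⁾` gives
`(X ⊗ id) ad(ab) = ε(a) (X ⊗ id) ad(b) + Σ κ(b⁽¹⁾) ((X ⊗ id) ad(a)) b⁽²⁾`.
Both terms vanish when `ε(a) = 0` and `(X ⊗ id) ad(a) = 0`, whatever `b` is.
-/

open TensorProduct

/-- The adjoint coaction `ad : A → A ⊗ A`, `ad(a) = Σ a⁽²⁾ ⊗ κ(a⁽¹⁾)a⁽³⁾`. -/
noncomputable def adjointCoaction (A : Type*) [Ring A] [HopfAlgebra ℂ A] :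
    A →ₗ[ℂ] A ⊗[ℂ] A :=
  (TensorProduct.map LinearMap.id (LinearMap.mul' ℂ A))
    ∘ₗ (TensorProduct.assoc ℂ A A A).toLinearMap
    ∘ₗ (TensorProduct.map
          ((TensorProduct.comm ℂ A A).toLinearMap
            ∘ₗ (TensorProduct.map (HopfAlgebra.antipode (R := ℂ)) LinearMap.id))
          LinearMap.id)
    ∘ₗ (TensorProduct.map (Coalgebra.comul (R := ℂ)) LinearMap.id)
    ∘ₗ (Coalgebra.comul (R := ℂ))

/-- An ε-derivation: a linear functional with `X(ab) = ε(a)X(b) + ε(b)X(a)`. -/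
def IsEpsDerivation {A : Type*} [Ring A] [HopfAlgebra ℂ A] (X : A →ₗ[ℂ] ℂ) : Prop :=
  ∀ a b : A, X (a * b) =
    Coalgebra.counit (R := ℂ) a * X b + Coalgebra.counit (R := ℂ) b * X a

open Coalgebra HopfAlgebra

namespace HopfAlgebra

variable {R A : Type*} [CommSemiring R] [Semiring A] [HopfAlgebra R A]

/-- The map `ψ_X` above: the convolution `κ ⋆ X`. -/
noncomputable def antipodeConv (X : A →ₗ[R] R) : A →ₗ[R] A :=
  (TensorProduct.rid R A).toLinearMap ∘ₗ TensorProduct.map (antipode R) X ∘ₗ comul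

theorem antipodeConv_apply (X : A →ₗ[R] R) {a : A} {ι : Type*} (𝓡 : Repr R a ι) :
    antipodeConv X a = ∑ i ∈ 𝓡.index, X (𝓡.right i) • antipode R (𝓡.left i) := by
  simp [antipodeConv, ← 𝓡.eq]

@[simp]
theorem antipodeConv_counit : antipodeConv (counit : A →ₗ[R] R) = antipode R := by
  ext a
  have h := congr(TensorProduct.rid R A $(sum_map_tmul_counit_eq (antipode R) a (repr := ℛ R a)))
  simp only [map_sum, rid_tmul] at h
  rw [antipodeConv_apply _ (ℛ R a), h, one_smul]

end HopfAlgebra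

section

variable {A : Type*} [Ring A] [HopfAlgebra ℂ A]

theorem antipodeConv_mul {X : A →ₗ[ℂ] ℂ} (hX : IsEpsDerivation X) (a b : A) :
    antipodeConv X (a * b) =
      antipodeConv X b * antipode ℂ a + antipode ℂ b * antipodeConv X a := by
  rw [← antipodeConv_counit (R := ℂ) (A := A)]
  simp only [antipodeConv_apply _ (ℛ ℂ a), antipodeConv_apply _ (ℛ ℂ b),
    antipodeConv_apply _ ((ℛ ℂ a).mul (ℛ ℂ b)),
    Repr.mul_index, Repr.mul_left, Repr.mul_right,
    Finset.sum_product_right, Finset.sum_mul_sum, ← Finset.sum_add_distrib]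
  refine Finset.sum_congr rfl fun j _ => Finset.sum_congr rfl fun i _ => ?_
  rw [hX, antipode_mul_antidistrib, add_smul, smul_mul_smul, smul_mul_smul, mul_comm (counit _)]

noncomputable def adjointSlice (X : A →ₗ[ℂ] ℂ) : A →ₗ[ℂ] A :=
  (TensorProduct.lid ℂ A).toLinearMap ∘ₗ TensorProduct.map X LinearMap.id ∘ₗ adjointCoaction A

theorem adjointSlice_apply (X : A →ₗ[ℂ] ℂ) {a : A} {ι : Type*} (𝓡 : Repr ℂ a ι) :
    adjointSlice X a = ∑ i ∈ 𝓡.index, antipodeConv X (𝓡.left i) * 𝓡.right i := by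
  simp only [adjointSlice, adjointCoaction, LinearMap.comp_apply]
  rw [← 𝓡.eq]
  simp only [map_sum]
  refine Finset.sum_congr rfl fun i _ => ?_
  rw [antipodeConv_apply X (ℛ ℂ (𝓡.left i)), Finset.sum_mul, map_tmul,
    ← (ℛ ℂ (𝓡.left i)).eq]
  simp [map_sum, sum_tmul]

theorem adjointSlice_mul {X : A →ₗ[ℂ] ℂ} (hX : IsEpsDerivation X) (a b : A) :
    adjointSlice X (a * b) = counit (R := ℂ) a • adjointSlice X b +
      ∑ j ∈ (ℛ ℂ b).index, antipode ℂ ((ℛ ℂ b).left j) * adjointSlice X a * (ℛ ℂ b).right j := by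
  rw [adjointSlice_apply X ((ℛ ℂ a).mul (ℛ ℂ b)), adjointSlice_apply X (ℛ ℂ a),
    adjointSlice_apply X (ℛ ℂ b), Finset.smul_sum, ← Finset.sum_add_distrib]
  simp only [Repr.mul_index, Repr.mul_left, Repr.mul_right, Finset.sum_product_right]
  refine Finset.sum_congr rfl fun j _ => ?_
  calc ∑ i ∈ (ℛ ℂ a).index, antipodeConv X ((ℛ ℂ a).left i * (ℛ ℂ b).left j) *
        ((ℛ ℂ a).right i * (ℛ ℂ b).right j)
      = antipodeConv X ((ℛ ℂ b).left j) *
            (∑ i ∈ (ℛ ℂ a).index, antipode ℂ ((ℛ ℂ a).left i) * (ℛ ℂ a).right i) *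
            (ℛ ℂ b).right j +
          antipode ℂ ((ℛ ℂ b).left j) *
            (∑ i ∈ (ℛ ℂ a).index, antipodeConv X ((ℛ ℂ a).left i) * (ℛ ℂ a).right i) *
            (ℛ ℂ b).right j := by
        simp only [antipodeConv_mul hX, Finset.mul_sum, Finset.sum_mul, add_mul,
          Finset.sum_add_distrib, mul_assoc]
    _ = _ := by
        rw [sum_antipode_mul_eq_smul (ℛ ℂ a), mul_smul_comm, mul_one, smul_mul_assoc]

end

theorem Rhat_is_right_ideal_general {A : Type*} [Ring A] [HopfAlgebra ℂ A]
    (L : Set (A →ₗ[ℂ] ℂ)) (hL : ∀ X ∈ L, IsEpsDerivation X)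
    (Rhat : Set A)
    (hRhat : Rhat = {a : A | Coalgebra.counit (R := ℂ) a = 0 ∧
      ∀ X ∈ L, (TensorProduct.lid ℂ A).toLinearMap
        ((TensorProduct.map X LinearMap.id) (adjointCoaction A a)) = 0}) :
    (∀ a ∈ Rhat, Coalgebra.counit (R := ℂ) a = 0) ∧
    (0 : A) ∈ Rhat ∧
    (∀ a b : A, a ∈ Rhat → b ∈ Rhat → a + b ∈ Rhat) ∧
    (∀ (c : ℂ) (a : A), a ∈ Rhat → c • a ∈ Rhat) ∧
    (∀ a ∈ Rhat, ∀ b : A, a * b ∈ Rhat) := by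
  have hslice : ∀ (X : A →ₗ[ℂ] ℂ) (a : A), (TensorProduct.lid ℂ A).toLinearMap
      ((TensorProduct.map X LinearMap.id) (adjointCoaction A a)) = adjointSlice X a :=
    fun _ _ => rfl
  simp only [hslice] at hRhat
  subst hRhat
  refine ⟨fun a ha => ha.1, by simp, ?_, ?_, ?_⟩
  · rintro a b ⟨ha, hGa⟩ ⟨hb, hGb⟩
    exact ⟨by simp [ha, hb], fun X hX => by simp [hGa X hX, hGb X hX]⟩
  · rintro c a ⟨ha, hGa⟩
    exact ⟨by simp [ha], fun X hX => by simp [hGa X hX]⟩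
  · rintro a ⟨ha, hGa⟩ b
    exact ⟨by simp [Bialgebra.counit_mul, ha],
      fun X hX => by simp [adjointSlice_mul (hL X hX), ha, hGa X hX]⟩

/-- Let `R₀ ⊆ ker ε` be a right ideal and `L` a set of ε-derivations. Then
`𝓡̂ = {a ∈ ker ε : (X ⊗ id)(ad(a)) = 0 for all X ∈ L}` is a right ideal of `A`
contained in `ker ε`: it contains `0`, is closed under addition, scalar
multiplication and right multiplication by arbitrary elements of `A`. -/
theorem Rhat_is_right_ideal {A : Type*} [Ring A] [HopfAlgebra ℂ A]
    (L : Set (A →ₗ[ℂ] ℂ)) (hL : ∀ X ∈ L, IsEpsDerivation X)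
    (R₀ : Submodule ℂ A) (hR₀ker : ∀ a ∈ R₀, Coalgebra.counit (R := ℂ) a = 0)
    (hR₀ideal : ∀ a ∈ R₀, ∀ b : A, a * b ∈ R₀)
    (Rhat : Set A)
    (hRhat : Rhat = {a : A | Coalgebra.counit (R := ℂ) a = 0 ∧
      ∀ X ∈ L, (TensorProduct.lid ℂ A).toLinearMap
        ((TensorProduct.map X LinearMap.id) (adjointCoaction A a)) = 0}) :
    (∀ a ∈ Rhat, Coalgebra.counit (R := ℂ) a = 0) ∧
    (0 : A) ∈ Rhat ∧
    (∀ a b : A, a ∈ Rhat → b ∈ Rhat → a + b ∈ Rhat) ∧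
    (∀ (c : ℂ) (a : A), a ∈ Rhat → c • a ∈ Rhat) ∧
    (∀ a ∈ Rhat, ∀ b : A, a * b ∈ Rhat) :=
  Rhat_is_right_ideal_general L hL Rhat hRhat
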